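/- Let U ⊆ ℂ be open and convex, let 0 < δ < 1/4, let ψ : U → ℂ be holomorphic with |ψ(z) − 1| < δ on U, let g be the principal square root of ψ, and let G be a primitive of g on U. Let a, b ∈ U be distinct with [a, b] ⊆ U, set L = |b − a|, and let d be the Euclidean distance from the segment [a, b] to ℂ ∖ U; assume d > 4δL. Then for every x ∈ U with G(x) lying on the Euclidean segment from G(a) to G(b), one has: the Euclidean distance from x to ℂ ∖ U is greater than d/4, and the Euclidean distance from G(x) to ℂ ∖ G(U) is greater than d/4. -/

import Mathlib

/-- `g` is the principal square root of `ψ` on `U`: it is holomorphic on `U`, with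
`g² = ψ` and `Re g > 0` on `U`. -/
def IsPrincipalSqrtOn (U : Set ℂ) (ψ g : ℂ → ℂ) : Prop :=
  DifferentiableOn ℂ g U ∧ ∀ z ∈ U, g z ^ 2 = ψ z ∧ 0 < (g z).re

/-!
From `|ψ - 1| < δ` and `Re g > 0` one gets `|g - 1| ≤ δ`, so by the mean value inequality
`G - id` is `δ`-Lipschitz on the convex set `U`. Two consequences: `G` is expanding by at
least the factor `1 - δ`, and (surjectivity part of the inverse function theorem) `G` maps a
ball of radius `r` around `x` onto a set containing the ball of radius `(1 - δ) r` around
`G x`. If `G x = u G a + v G b`, then `y = u a + v b` lies on `[a, b]` and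
`|G x - G y| ≤ δ L / 2`, since `G - id` is Lipschitz; so `x` is within `δ L / (2 (1 - δ))` of
`y`, hence at distance at least `d - d / 6` from `ℂ ∖ U`, and `G x` at distance at least
`(1 - δ)` times that from `ℂ ∖ G(U)`.
-/

open Metric Set
open scoped NNReal

theorem Complex.norm_sub_one_le_norm_sq_sub_one {w : ℂ} (hw : 0 ≤ w.re) :
    ‖w - 1‖ ≤ ‖w ^ 2 - 1‖ := by
  have h1 : 1 ≤ ‖w + 1‖ :=
    calc (1 : ℝ) ≤ (w + 1).re := by simp [hw]
      _ ≤ ‖w + 1‖ := Complex.re_le_norm _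
  calc ‖w - 1‖ ≤ ‖w - 1‖ * ‖w + 1‖ := le_mul_of_one_le_right (norm_nonneg _) h1
    _ = ‖w ^ 2 - 1‖ := by rw [← norm_mul]; ring_nf

theorem LipschitzOnWith.norm_convexCombination_sub_le {E F : Type*} [NormedAddCommGroup E]
    [NormedSpace ℝ E] [NormedAddCommGroup F] [NormedSpace ℝ F] {h : E → F} {K : ℝ≥0}
    {s : Set E} (hh : LipschitzOnWith K h s) {a b : E} (ha : a ∈ s) (hb : b ∈ s)
    {u v : ℝ} (hu : 0 ≤ u) (hv : 0 ≤ v) (huv : u + v = 1) (hy : u • a + v • b ∈ s) :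
    ‖u • h a + v • h b - h (u • a + v • b)‖ ≤ K * ‖a - b‖ / 2 := by
  obtain rfl : v = 1 - u := by linarith
  set y := u • a + (1 - u) • b
  have hay : a - y = (1 - u) • (a - b) := by module
  have hby : b - y = u • (b - a) := by module
  have hnorm := hh.norm_sub_le
  calc ‖u • h a + (1 - u) • h b - h y‖ = ‖u • (h a - h y) + (1 - u) • (h b - h y)‖ := by
        congr 1; module
    _ ≤ u * (K * ‖a - y‖) + (1 - u) * (K * ‖b - y‖) := by
        refine (norm_add_le _ _).trans (add_le_add ?_ ?_) <;>
          rw [norm_smul, Real.norm_of_nonneg ‹_›] <;> gcongr <;> apply hnorm <;> assumption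
    _ = 2 * (u * (1 - u)) * (K * ‖a - b‖) := by
        rw [hay, hby, norm_smul, norm_smul, Real.norm_of_nonneg hu, Real.norm_of_nonneg hv,
          norm_sub_rev b a]; ring
    _ ≤ K * ‖a - b‖ / 2 := by
        have : u * (1 - u) ≤ 1 / 4 := by nlinarith [sq_nonneg (2 * u - 1)]
        nlinarith [mul_nonneg K.coe_nonneg (norm_nonneg (a - b))]

theorem IsPrincipalSqrtOn.norm_sub_one_le {U : Set ℂ} {ψ g : ℂ → ℂ} (hg : IsPrincipalSqrtOn U ψ g)
    {z : ℂ} (hz : z ∈ U) : ‖g z - 1‖ ≤ ‖ψ z - 1‖ := by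
  obtain ⟨hsq, hre⟩ := hg.2 z hz
  exact hsq ▸ Complex.norm_sub_one_le_norm_sq_sub_one hre.le

section ApproximatesId

variable {𝕜 E : Type*} [NontriviallyNormedField 𝕜] [NormedAddCommGroup E] [NormedSpace 𝕜 E]
  {f : E → E} {s : Set E} {c : ℝ≥0}

namespace ApproximatesLinearOn

theorem mul_norm_sub_le_norm_image_sub (hf : ApproximatesLinearOn f (.id 𝕜 E) s c) {x y : E}
    (hx : x ∈ s) (hy : y ∈ s) : (1 - c) * ‖x - y‖ ≤ ‖f x - f y‖ := by
  have hxy := hf x hx y hy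
  have := norm_sub_norm_le (x - y) (f x - f y)
  rw [norm_sub_rev (x - y)] at this
  simp only [ContinuousLinearMap.id_apply] at hxy
  linarith

theorem isClosed_of_image_eq_univ [CompleteSpace E] (hf : ApproximatesLinearOn f (.id 𝕜 E) s c)
    (hc : c < 1) (himage : f '' s = univ) : IsClosed s := by
  have hc' : (0 : ℝ) < 1 - c := sub_pos.2 (by exact_mod_cast hc)
  have hanti : AntilipschitzWith (Real.toNNReal (1 - c)⁻¹) (s.domRestrict f) :=
    AntilipschitzWith.of_le_mul_dist fun x y => by
      rw [Real.coe_toNNReal _ (inv_nonneg.2 hc'.le), le_inv_mul_iff₀ hc']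
      simpa only [Subtype.dist_eq, dist_eq_norm, domRestrict_apply] using
        hf.mul_norm_sub_le_norm_image_sub x.2 y.2
  have hcomplete : CompleteSpace s := by
    rw [completeSpace_iff_isComplete_range (hanti.isUniformInducing hf.lipschitz.uniformContinuous),
      range_domRestrict, himage]
    exact isComplete_univ
  exact (completeSpace_coe_iff_isComplete.1 hcomplete).isClosed

theorem closedBall_subset_image [CompleteSpace E] (hf : ApproximatesLinearOn f (.id 𝕜 E) s c)
    {x : E} {ε : ℝ} (hε : 0 ≤ ε) (hball : closedBall x ε ⊆ s) :
    closedBall (f x) ((1 - c) * ε) ⊆ f '' s := by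
  let idInverse : (ContinuousLinearMap.id 𝕜 E).NonlinearRightInverse :=
    { toFun := id, nnnorm := 1, bound' := fun y => by simp, right_inv' := fun y => rfl }
  have := hf.surjOn_closedBall_of_nonlinearRightInverse idInverse hε hball
  simp only [idInverse, NNReal.coe_one, inv_one] at this
  exact this.mono hball subset_rfl

theorem mul_infDist_compl_le_infDist_compl_image [CompleteSpace E] [PreconnectedSpace E]
    (hf : ApproximatesLinearOn f (.id 𝕜 E) s c) (hc : c < 1) (hs : IsOpen s)
    (hsc : sᶜ.Nonempty) (x : E) :
    (1 - c) * infDist x sᶜ ≤ infDist (f x) (f '' s)ᶜ := by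
  have hc' : (0 : ℝ) < 1 - c := sub_pos.2 (by exact_mod_cast hc)
  rw [mul_comm, ← le_div_iff₀ hc']
  refine le_of_forall_lt_imp_le_of_dense fun ε hε => ?_
  rcases lt_or_ge ε 0 with hε0 | hε0
  · exact hε0.le.trans (div_nonneg infDist_nonneg hc'.le)
  have hball : closedBall x ε ⊆ s := (closedBall_subset_ball hε).trans ball_infDist_compl_subset
  have himage : (f '' s)ᶜ.Nonempty := by
    refine nonempty_compl.2 fun himage => hsc.ne_empty (compl_empty_iff.2 ?_)
    exact (isClopen_iff.1 ⟨hf.isClosed_of_image_eq_univ hc himage, hs⟩).resolve_left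
      (nonempty_of_mem (hball (mem_closedBall_self hε0))).ne_empty
  rw [le_div_iff₀ hc', mul_comm, le_infDist himage]
  intro y hy
  by_contra! hlt
  exact hy (hf.closedBall_subset_image hε0 hball (mem_closedBall'.2 hlt.le))

end ApproximatesLinearOn

end ApproximatesId

theorem geodesic_segment_far_from_boundary_general (U : Set ℂ) (hU : IsOpen U)
    (hconv : Convex ℝ U)
    (δ : ℝ) (hδ0 : 0 < δ) (hδ : δ < 1 / 4) (ψ g G : ℂ → ℂ)
    (hψb : ∀ z ∈ U, ‖ψ z - 1‖ < δ)
    (hg : IsPrincipalSqrtOn U ψ g)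
    (hG : ∀ z ∈ U, HasDerivAt G (g z) z)
    (a b : ℂ) (ha : a ∈ U) (hb : b ∈ U)
    (hseg : segment ℝ a b ⊆ U)
    (L d : ℝ) (hL : L = ‖b - a‖)
    (hd : d = ⨅ x : segment ℝ a b, Metric.infDist (x : ℂ) Uᶜ)
    (hdL : d > 4 * δ * L) :
    ∀ x ∈ U, G x ∈ segment ℝ (G a) (G b) →
      Metric.infDist x Uᶜ > d / 4 ∧ Metric.infDist (G x) (G '' U)ᶜ > d / 4 := by
  have hd_le : ∀ y ∈ segment ℝ a b, d ≤ infDist y Uᶜ := fun y hy =>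
    hd ▸ ciInf_le ⟨0, forall_mem_range.2 fun _ => infDist_nonneg⟩ (⟨y, hy⟩ : segment ℝ a b)
  have hL0 : 0 ≤ L := hL ▸ norm_nonneg _
  have hUc : Uᶜ.Nonempty := nonempty_iff_ne_empty.2 fun hempty => by
    have := hd_le a (left_mem_segment ℝ a b)
    rw [hempty, infDist_empty] at this
    nlinarith
  have hδc : (δ.toNNReal : ℝ) = δ := Real.coe_toNNReal _ hδ0.le
  have hlip : LipschitzOnWith δ.toNNReal (fun z => G z - z) U := by
    refine hconv.lipschitzOnWith_of_nnnorm_hasDerivWithin_le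
      (fun z hz => ((hG z hz).sub (hasDerivAt_id z)).hasDerivWithinAt) fun z hz => ?_
    rw [← NNReal.coe_le_coe, coe_nnnorm, hδc]
    exact (hg.norm_sub_one_le hz).trans (hψb z hz).le
  have hGU : ApproximatesLinearOn G (.id ℂ ℂ) U δ.toNNReal := hlip.approximatesLinearOn
  intro x hx ⟨u, v, hu, hv, huv, hGx⟩
  set y := u • a + v • b
  have hy : y ∈ segment ℝ a b := ⟨u, v, hu, hv, huv, rfl⟩
  have hGxy : ‖G x - G y‖ ≤ δ * L / 2 := by
    have := hlip.norm_convexCombination_sub_le ha hb hu hv huv (hseg hy)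
    rw [hδc, norm_sub_rev a, ← hL] at this
    have hdefect : G x - G y = u • (G a - a) + v • (G b - b) - (G y - y) := by
      rw [← hGx]; module
    rwa [hdefect]
  have hxy : (1 - δ) * ‖x - y‖ ≤ δ * L / 2 :=
    (hδc ▸ hGU.mul_norm_sub_le_norm_image_sub hx (hseg hy)).trans hGxy
  have hdx : d ≤ infDist x Uᶜ + ‖x - y‖ :=
    (hd_le y hy).trans (by rw [← dist_eq_norm, dist_comm]; exact infDist_le_infDist_add_dist)
  have hGx_far := hGU.mul_infDist_compl_le_infDist_compl_image
    (by rw [← NNReal.coe_lt_coe, hδc]; norm_num; linarith) hU hUc x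
  rw [hδc] at hGx_far
  constructor <;> nlinarith [norm_nonneg (x - y), infDist_nonneg (x := x) (s := Uᶜ)]

/-- Part (iv) of Lemma 2.5 of the paper, in the planar model: with `ψ`, `g`, `G` as
before on an open convex `U`, `a ≠ b` in `U` with `[a,b] ⊆ U`, `L = |b − a|`, and `d`
the Euclidean distance from `[a,b]` to `ℂ ∖ U` satisfying `d > 4δL`, every point `x ∈ U`
whose image `G x` lies on the straight segment from `G a` to `G b` satisfies: the
distance from `x` to `ℂ ∖ U` exceeds `d/4`, and the distance from `G x` to
`ℂ ∖ G(U)` exceeds `d/4`. -/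
theorem geodesic_segment_far_from_boundary (U : Set ℂ) (hU : IsOpen U)
    (hconv : Convex ℝ U)
    (δ : ℝ) (hδ0 : 0 < δ) (hδ : δ < 1 / 4) (ψ g G : ℂ → ℂ)
    (hψ : DifferentiableOn ℂ ψ U)
    (hψb : ∀ z ∈ U, ‖ψ z - 1‖ < δ)
    (hg : IsPrincipalSqrtOn U ψ g)
    (hG : ∀ z ∈ U, HasDerivAt G (g z) z)
    (a b : ℂ) (ha : a ∈ U) (hb : b ∈ U) (hab : a ≠ b)
    (hseg : segment ℝ a b ⊆ U)
    (L d : ℝ) (hL : L = ‖b - a‖)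
    (hd : d = ⨅ x : segment ℝ a b, Metric.infDist (x : ℂ) Uᶜ)
    (hdL : d > 4 * δ * L) :
    ∀ x ∈ U, G x ∈ segment ℝ (G a) (G b) →
      Metric.infDist x Uᶜ > d / 4 ∧ Metric.infDist (G x) (G '' U)ᶜ > d / 4 :=
  geodesic_segment_far_from_boundary_general U hU hconv δ hδ0 hδ ψ g G hψb hg hG a b ha hb hseg L d
    hL hd hdL
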